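/- Let N be a quantum channel from A to B and P a quantum channel from A^{⊗n} to B^{⊗n}, n ≥ 1, and let π be the maximally mixed state on A. For 0 ≤ i ≤ n define the reduced channel P_{1:i} from A^{⊗i} to B^{⊗i} by P_{1:i}(X) := tr_{B_{i+1}⋯B_n} P(X ⊗ π^{⊗(n−i)}) (so P_{1:n} = P and P_{1:0} is trivial). Define the channel G₂ from A^{⊗n} to B^{⊗n}⊗ℂ^n by G₂(X) := (1/n) ∑_{k=1}^{n} (N^{⊗(k−1)} ⊗ P_{1:n−k+1})(X) ⊗ |k⟩⟨k|, and the channel C from A^{⊗(n−1)} to B^{⊗(n−1)}⊗ℂ^n by C(X) := (1/n) ∑_{k=1}^{n} (N^{⊗(k−1)} ⊗ P_{1:n−k})(X) ⊗ |k⟩⟨k|. Then the reduced channel of G₂ obtained by feeding π into the n-th input factor and tracing out the n-th output B-factor equals C: for all X on A^{⊗(n−1)}, tr_{B_n} G₂(X ⊗ π) = C(X). -/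

import Mathlib

open scoped BigOperators
open Matrix
open ComplexOrder

noncomputable section

namespace PaperQI

/-- The trace norm `tr √(MᴴM)` of a complex square matrix (sum of singular values). -/
noncomputable def traceNorm {ι : Type} [Fintype ι] [DecidableEq ι] (M : Matrix ι ι ℂ) : ℝ :=
  (((Matrix.posSemidef_conjTranspose_mul_self M).1.eigenvectorUnitary.1 *
      Matrix.diagonal ((fun x : ℝ => (x : ℂ)) ∘ (√·) ∘ (Matrix.posSemidef_conjTranspose_mul_self M).1.eigenvalues) *
      (star (Matrix.posSemidef_conjTranspose_mul_self M).1.eigenvectorUnitary : Matrix ι ι ℂ)).trace).re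

/-- The trace distance `Δ(ρ,σ) = ½‖ρ − σ‖₁`. -/
noncomputable def traceDist {ι : Type} [Fintype ι] [DecidableEq ι] (ρ σ : Matrix ι ι ℂ) : ℝ :=
  traceNorm (ρ - σ) / 2

/-- A quantum state: a positive semidefinite matrix of unit trace. -/
def IsState {ι : Type} [Fintype ι] (M : Matrix ι ι ℂ) : Prop :=
  M.PosSemidef ∧ M.trace = 1

/-- Kronecker/tensor product of two matrices, on the product index type. -/
def kron {ι κ : Type} (M : Matrix ι ι ℂ) (N : Matrix κ κ ℂ) :
    Matrix (ι × κ) (ι × κ) ℂ := fun p q => M p.1 q.1 * N p.2 q.2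

/-- The `n`-fold tensor power `ρ^{⊗n}`. -/
def tensorPow {ι : Type} (ρ : Matrix ι ι ℂ) (n : ℕ) :
    Matrix (Fin n → ι) (Fin n → ι) ℂ := fun x y => ∏ i, ρ (x i) (y i)

/-- Partial trace over the second tensor factor. -/
noncomputable def ptraceRight {ι κ : Type} [Fintype κ] (M : Matrix (ι × κ) (ι × κ) ℂ) :
    Matrix ι ι ℂ := fun a b => ∑ c, M (a, c) (b, c)

/-- Partial trace over the first tensor factor. -/
noncomputable def ptraceLeft {ι κ : Type} [Fintype ι] (M : Matrix (ι × κ) (ι × κ) ℂ) :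
    Matrix κ κ ℂ := fun a b => ∑ c, M (c, a) (c, b)

/-- Marginal of a multipartite state on `S^{⊗m}` on the `i`-th tensor factor. -/
noncomputable def marginal {ι : Type} [Fintype ι] [DecidableEq ι] {m : ℕ}
    (η : Matrix (Fin m → ι) (Fin m → ι) ℂ) (i : Fin m) : Matrix ι ι ℂ :=
  fun a b => ∑ x : Fin m → ι, if x i = a then η x (Function.update x i b) else 0

/-- The extension `id_τ ⊗ Φ` of a map on matrices, acting blockwise. -/
def rightExt {ι κ τ : Type} (Φ : Matrix ι ι ℂ → Matrix κ κ ℂ) :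
    Matrix (τ × ι) (τ × ι) ℂ → Matrix (τ × κ) (τ × κ) ℂ :=
  fun M p q => Φ (fun x y => M (p.1, x) (q.1, y)) p.2 q.2

/-- The extension `Φ ⊗ id_τ`. -/
def leftExt {ι κ τ : Type} (Φ : Matrix ι ι ℂ → Matrix κ κ ℂ) :
    Matrix (ι × τ) (ι × τ) ℂ → Matrix (κ × τ) (κ × τ) ℂ :=
  fun M p q => Φ (fun x y => M (x, p.2) (y, q.2)) p.1 q.1

/-- Complete positivity: every finite-dimensional extension `id ⊗ Φ` preserves
positive semidefiniteness. -/
def IsCP {ι κ : Type} [Fintype ι] [Fintype κ] (Φ : Matrix ι ι ℂ → Matrix κ κ ℂ) : Prop :=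
  ∀ (n : ℕ) (M : Matrix (Fin n × ι) (Fin n × ι) ℂ), M.PosSemidef →
    (rightExt Φ M).PosSemidef

/-- Trace preserving. -/
def IsTP {ι κ : Type} [Fintype ι] [Fintype κ] (Φ : Matrix ι ι ℂ → Matrix κ κ ℂ) : Prop :=
  ∀ M, (Φ M).trace = M.trace

/-- Trace nonincreasing on positive semidefinite inputs. -/
def IsTNI {ι κ : Type} [Fintype ι] [Fintype κ] (Φ : Matrix ι ι ℂ → Matrix κ κ ℂ) : Prop :=
  ∀ M : Matrix ι ι ℂ, M.PosSemidef → ((Φ M).trace).re ≤ (M.trace).re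

/-- A quantum channel: linear, completely positive and trace preserving. -/
def IsChannel {ι κ : Type} [Fintype ι] [Fintype κ] (Φ : Matrix ι ι ℂ → Matrix κ κ ℂ) : Prop :=
  IsLinearMap ℂ Φ ∧ IsCP Φ ∧ IsTP Φ


/-- The diamond norm `‖Φ‖_⋄ = sup_ρ ‖(id_R ⊗ Φ)(ρ)‖₁`, with reference system `R = A`
(which suffices for maps out of `A`). -/
noncomputable def diamondNorm {ι κ : Type} [Fintype ι] [DecidableEq ι]
    [Fintype κ] [DecidableEq κ] (Φ : Matrix ι ι ℂ → Matrix κ κ ℂ) : ℝ :=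
  sSup {x : ℝ | ∃ ρ : Matrix (ι × ι) (ι × ι) ℂ, IsState ρ ∧ x = traceNorm (rightExt Φ ρ)}

/-- The von Neumann entropy `S(ρ) = −tr(ρ log ρ)`, via eigenvalues. -/
noncomputable def entropy {ι : Type} [Fintype ι] [DecidableEq ι] (ρ : Matrix ι ι ℂ) : ℝ :=
  if h : ρ.IsHermitian then -∑ i, h.eigenvalues i * Real.log (h.eigenvalues i) else 0

/-- The quantum mutual information `I(B:R)_ρ = S(ρ_B) + S(ρ_R) − S(ρ_{BR})` of a bipartite
state (first factor `B`, second factor `R`). -/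
noncomputable def mutualInfo {ι κ : Type} [Fintype ι] [DecidableEq ι]
    [Fintype κ] [DecidableEq κ] (ρ : Matrix (ι × κ) (ι × κ) ℂ) : ℝ :=
  entropy (ptraceRight ρ) + entropy (ptraceLeft ρ) - entropy ρ

/-- The mutual information of a channel, `I(N) = sup_φ I(B:R)_{(id_R ⊗ N)(φ)}`, the
supremum over states `φ` on `R ⊗ A` with `R = A`. -/
noncomputable def channelMI {ι κ : Type} [Fintype ι] [DecidableEq ι]
    [Fintype κ] [DecidableEq κ] (Φ : Matrix ι ι ℂ → Matrix κ κ ℂ) : ℝ :=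
  sSup {x : ℝ | ∃ φ : Matrix (ι × ι) (ι × ι) ℂ, IsState φ ∧ x = mutualInfo (rightExt Φ φ)}

/-- The binary entropy `h₂(x) = −x log x − (1−x) log(1−x)`. -/
noncomputable def binEntropy (x : ℝ) : ℝ :=
  -(x * Real.log x) - (1 - x) * Real.log (1 - x)

/-- Tensor product `Φ ⊗ Ψ` of two maps on matrices. -/
def mapTensor {α₁ β₁ α₂ β₂ : Type} (Φ : Matrix α₁ α₁ ℂ → Matrix β₁ β₁ ℂ)
    (Ψ : Matrix α₂ α₂ ℂ → Matrix β₂ β₂ ℂ) :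
    Matrix (α₁ × α₂) (α₁ × α₂) ℂ → Matrix (β₁ × β₂) (β₁ × β₂) ℂ :=
  rightExt Ψ ∘ leftExt Φ

/-- Relabelling a matrix along an equivalence of index types. -/
def reindexMap {ι κ : Type} (e : ι ≃ κ) : Matrix ι ι ℂ → Matrix κ κ ℂ :=
  fun M => M.submatrix e.symm e.symm

/-- Splitting `n = r + j` tensor factors into the first `r` and the last `j`. -/
def splitEquiv {r j n : ℕ} (h : r + j = n) (α : Type) :
    (Fin n → α) ≃ (Fin r → α) × (Fin j → α) :=
  (Equiv.arrowCongr (finCongr h) (Equiv.refl α)).symm.trans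
    ((Equiv.arrowCongr finSumFinEquiv (Equiv.refl α)).symm.trans
      (Equiv.sumArrowEquivProdArrow (Fin r) (Fin j) α))

/-- The `r`-fold tensor power `Φ^{⊗r}` of a map on matrices, defined by its action on
matrix units. -/
noncomputable def mapPow {α β : Type} [Fintype α] [DecidableEq α]
    (Φ : Matrix α α ℂ → Matrix β β ℂ) (r : ℕ) :
    Matrix (Fin r → α) (Fin r → α) ℂ → Matrix (Fin r → β) (Fin r → β) ℂ :=
  fun M y y' => ∑ x : Fin r → α, ∑ x' : Fin r → α,
    M x x' * ∏ t, Φ (Matrix.single (x t) (x' t) 1) (y t) (y' t)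

/-- The tensor product `Φ ⊗ Ψ` of a map on the first `r` factors with a map on the last
`j` factors, as a map on all `n = r + j` factors. -/
noncomputable def tensorSplit {α β : Type} {r j n : ℕ} (h : r + j = n)
    (Φ : Matrix (Fin r → α) (Fin r → α) ℂ → Matrix (Fin r → β) (Fin r → β) ℂ)
    (Ψ : Matrix (Fin j → α) (Fin j → α) ℂ → Matrix (Fin j → β) (Fin j → β) ℂ) :
    Matrix (Fin n → α) (Fin n → α) ℂ → Matrix (Fin n → β) (Fin n → β) ℂ :=
  reindexMap (splitEquiv h β).symm ∘ mapTensor Φ Ψ ∘ reindexMap (splitEquiv h α)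

/-- The reduced channel `P_{1:i}(X) = tr_{B_{i+1}⋯B_n} P(X ⊗ π^{⊗(n−i)})` of a channel on
`n` tensor factors. -/
noncomputable def reducedCh {α β : Type} [Fintype α] [Fintype β] [DecidableEq β] {n : ℕ}
    (P : Matrix (Fin n → α) (Fin n → α) ℂ → Matrix (Fin n → β) (Fin n → β) ℂ)
    (π : Matrix α α ℂ) (i : ℕ) (hi : i ≤ n) :
    Matrix (Fin i → α) (Fin i → α) ℂ → Matrix (Fin i → β) (Fin i → β) ℂ :=
  fun X a b => ∑ w : Fin n → β,
    if (fun t : Fin i => w (Fin.castLE hi t)) = a then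
      P (fun x y =>
          X (fun t => x (Fin.castLE hi t)) (fun t => y (Fin.castLE hi t)) *
            ∏ s : Fin n, if i ≤ (s : ℕ) then π (x s) (y s) else 1)
        w (fun s : Fin n => if h : (s : ℕ) < i then b ⟨s, h⟩ else w s)
    else 0

/-- The channel `G₂(X) = (1/n) ∑_{k=1}^{n} (N^{⊗(k−1)} ⊗ P_{1:n−k+1})(X) ⊗ |k⟩⟨k|`. -/
noncomputable def G2 {α β : Type} [Fintype α] [DecidableEq α] [Fintype β] [DecidableEq β]
    {n : ℕ} (N : Matrix α α ℂ → Matrix β β ℂ)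
    (P : Matrix (Fin n → α) (Fin n → α) ℂ → Matrix (Fin n → β) (Fin n → β) ℂ)
    (π : Matrix α α ℂ) :
    Matrix (Fin n → α) (Fin n → α) ℂ →
      Matrix ((Fin n → β) × Fin n) ((Fin n → β) × Fin n) ℂ :=
  fun X p q =>
    if p.2 = q.2 then
      (1 / (n : ℂ)) *
        (tensorSplit (by have := p.2.isLt; omega : (p.2 : ℕ) + (n - (p.2 : ℕ)) = n)
          (mapPow N (p.2 : ℕ)) (reducedCh P π (n - (p.2 : ℕ)) (Nat.sub_le n _)) X) p.1 q.1
    else 0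

/-- The catalyst channel `C(X) = (1/n) ∑_{k=1}^{n} (N^{⊗(k−1)} ⊗ P_{1:n−k})(X) ⊗ |k⟩⟨k|`. -/
noncomputable def Ccat {α β : Type} [Fintype α] [DecidableEq α] [Fintype β] [DecidableEq β]
    {n : ℕ} (N : Matrix α α ℂ → Matrix β β ℂ)
    (P : Matrix (Fin n → α) (Fin n → α) ℂ → Matrix (Fin n → β) (Fin n → β) ℂ)
    (π : Matrix α α ℂ) :
    Matrix (Fin (n - 1) → α) (Fin (n - 1) → α) ℂ →
      Matrix ((Fin (n - 1) → β) × Fin n) ((Fin (n - 1) → β) × Fin n) ℂ :=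
  fun X p q =>
    if p.2 = q.2 then
      (1 / (n : ℂ)) *
        (tensorSplit
          (by have := p.2.isLt; omega : (p.2 : ℕ) + (n - 1 - (p.2 : ℕ)) = n - 1)
          (mapPow N (p.2 : ℕ)) (reducedCh P π (n - 1 - (p.2 : ℕ)) (by omega)) X) p.1 q.1
    else 0

/-- Feeding the state `π` into the `n`-th input factor of `G` and tracing out the `n`-th
output `B`-factor (keeping the classical register). -/
noncomputable def feedTraceLast {α β : Type} [Fintype α] [Fintype β] {n : ℕ}
    (G : Matrix (Fin n → α) (Fin n → α) ℂ →
      Matrix ((Fin n → β) × Fin n) ((Fin n → β) × Fin n) ℂ)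
    (π : Matrix α α ℂ)
    (X : Matrix (Fin (n - 1) → α) (Fin (n - 1) → α) ℂ) :
    Matrix ((Fin (n - 1) → β) × Fin n) ((Fin (n - 1) → β) × Fin n) ℂ :=
  fun p q => ∑ w : β,
    G (fun x y =>
        X (fun t => x (Fin.castLE (Nat.sub_le n 1) t))
          (fun t => y (Fin.castLE (Nat.sub_le n 1) t)) *
          ∏ s : Fin n, if n - 1 ≤ (s : ℕ) then π (x s) (y s) else 1)
      ((fun s : Fin n => if h : (s : ℕ) < n - 1 then p.1 ⟨s, h⟩ else w), p.2)
      ((fun s : Fin n => if h : (s : ℕ) < n - 1 then q.1 ⟨s, h⟩ else w), q.2)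

/-! Reducing the `k`-th block `N^{⊗k} ⊗ P_{1:n-k}` of `G₂` on its last factor touches only the
`P`-part, because `N^{⊗k}` is linear and the entries of `π` are scalars for it. What is left,
`P_{1:n-k}` with one more tail factor fed with `π` and traced out, is `P_{1:n-1-k}`: feeding
`π^{⊗(n-j)}` after `π^{⊗(j-i)}` is feeding `π^{⊗(n-i)}`, and partial traces compose. -/

section ReducedChannels

variable {α β γ : Type}

def updateHead {i n : ℕ} (b : Fin i → γ) (w : Fin n → γ) : Fin n → γ :=
  fun s => if h : (s : ℕ) < i then b ⟨s, h⟩ else w s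

/-- `X ⊗ π^{⊗(n-i)}` -/
def padTail (π : Matrix α α ℂ) {i n : ℕ} (hi : i ≤ n) (X : Matrix (Fin i → α) (Fin i → α) ℂ) :
    Matrix (Fin n → α) (Fin n → α) ℂ :=
  fun x y => X (fun t => x (Fin.castLE hi t)) (fun t => y (Fin.castLE hi t)) *
    ∏ s : Fin n, if i ≤ (s : ℕ) then π (x s) (y s) else 1

/-- `tr_{i+1 ⋯ n} M` -/
def ptraceTail [Fintype β] [DecidableEq β] {i n : ℕ} (hi : i ≤ n)
    (M : Matrix (Fin n → β) (Fin n → β) ℂ) : Matrix (Fin i → β) (Fin i → β) ℂ :=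
  fun a b => ∑ w : Fin n → β,
    if (fun t : Fin i => w (Fin.castLE hi t)) = a then M w (updateHead b w) else 0

lemma reducedCh_eq_ptraceTail [Fintype α] [Fintype β] [DecidableEq β] {i n : ℕ}
    (P : Matrix (Fin n → α) (Fin n → α) ℂ → Matrix (Fin n → β) (Fin n → β) ℂ)
    (π : Matrix α α ℂ) (hi : i ≤ n) (X : Matrix (Fin i → α) (Fin i → α) ℂ) :
    reducedCh P π i hi X = ptraceTail hi (P (padTail π hi X)) :=
  rfl

lemma prod_castLE_eq_prod_ite {M : Type} [CommMonoid M] {j n : ℕ} (h : j ≤ n) (f : Fin n → M) :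
    ∏ s : Fin j, f (Fin.castLE h s) = ∏ s : Fin n, if (s : ℕ) < j then f s else 1 := by
  refine Fintype.prod_of_injective _ (Fin.castLE_injective h) _ _ (fun s hs => ?_) fun s => ?_
  · rw [if_neg fun hsj => hs ⟨⟨s, hsj⟩, rfl⟩]
  · rw [if_pos (by simp)]

lemma padTail_padTail (π : Matrix α α ℂ) {i j n : ℕ} (hij : i ≤ j) (hjn : j ≤ n)
    (X : Matrix (Fin i → α) (Fin i → α) ℂ) :
    padTail π hjn (padTail π hij X) = padTail π (hij.trans hjn) X := by
  ext x y
  have hprod : ∀ f : Fin n → ℂ,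
      (∏ s : Fin j, if i ≤ (s : ℕ) then f (Fin.castLE hjn s) else 1) *
        (∏ s : Fin n, if j ≤ (s : ℕ) then f s else 1) =
        ∏ s : Fin n, if i ≤ (s : ℕ) then f s else 1 := by
    intro f
    have hcast := prod_castLE_eq_prod_ite hjn fun s => if i ≤ (s : ℕ) then f s else 1
    simp only [Fin.val_castLE] at hcast
    rw [hcast, ← Finset.prod_mul_distrib]
    refine Finset.prod_congr rfl fun s _ => ?_
    split_ifs <;> first | omega | simp
  simp only [padTail, Fin.castLE_castLE, mul_assoc]
  rw [hprod fun s => π (x s) (y s)]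

lemma updateHead_updateHead {i j n : ℕ} (hij : i ≤ j) (hjn : j ≤ n) (b : Fin i → γ)
    (w : Fin n → γ) :
    updateHead (updateHead b fun t : Fin j => w (Fin.castLE hjn t)) w = updateHead b w := by
  funext s
  simp only [updateHead, Fin.castLE_mk]
  split_ifs <;> first | rfl | omega

lemma ptraceTail_ptraceTail [Fintype β] [DecidableEq β] {i j n : ℕ} (hij : i ≤ j) (hjn : j ≤ n)
    (M : Matrix (Fin n → β) (Fin n → β) ℂ) :
    ptraceTail hij (ptraceTail hjn M) = ptraceTail (hij.trans hjn) M := by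
  ext a b
  simp only [ptraceTail, Finset.ite_sum_zero]
  rw [Finset.sum_comm]
  refine Finset.sum_congr rfl fun w _ => ?_
  rw [Finset.sum_eq_single (fun t => w (Fin.castLE hjn t))]
  · simp only [Fin.castLE_castLE, updateHead_updateHead hij, if_true]
  · intro v _ hv
    simp only [Ne.symm hv, if_false, ite_self]
  · simp

lemma ptraceTail_sub_one_apply [Fintype β] [DecidableEq β] {n : ℕ} (hn : 0 < n)
    (M : Matrix (Fin n → β) (Fin n → β) ℂ) (a b : Fin (n - 1) → β) :
    ptraceTail (Nat.sub_le n 1) M a b =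
      ∑ c : β, M (updateHead a fun _ => c) (updateHead b fun _ => c) := by
  have hupdate : ∀ (e : Fin (n - 1) → β) (w : Fin n → β),
      updateHead e w = updateHead e fun _ => w ⟨n - 1, by omega⟩ := by
    intro e w
    funext s
    simp only [updateHead]
    split_ifs
    · rfl
    · exact congrArg w (Fin.ext (by dsimp only; omega))
  have hiff : ∀ (w : Fin n → β) (c : β),
      w = updateHead a (fun _ => c) ↔
        (fun t => w (Fin.castLE (Nat.sub_le n 1) t)) = a ∧ w ⟨n - 1, by omega⟩ = c := by
    intro w c
    constructor
    · rintro rfl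
      exact ⟨funext fun t => by simp [updateHead], by simp [updateHead]⟩
    · rintro ⟨rfl, rfl⟩
      rw [← hupdate]
      funext s
      simp only [updateHead]
      split_ifs <;> rfl
  calc ptraceTail (Nat.sub_le n 1) M a b
      = ∑ w : Fin n → β, ∑ c : β,
          if w = updateHead a (fun _ => c) then M w (updateHead b fun _ => c) else 0 := by
        refine Finset.sum_congr rfl fun w _ => ?_
        simp only [hiff, ite_and, ← Finset.ite_sum_zero, Finset.sum_ite_eq, Finset.mem_univ,
          if_true, ← hupdate]
    _ = ∑ c : β, M (updateHead a fun _ => c) (updateHead b fun _ => c) := by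
        rw [Finset.sum_comm]
        simp only [Finset.sum_ite_eq', Finset.mem_univ, if_true]

theorem reducedCh_reducedCh [Fintype α] [Fintype β] [DecidableEq β] {i j n : ℕ}
    (P : Matrix (Fin n → α) (Fin n → α) ℂ → Matrix (Fin n → β) (Fin n → β) ℂ)
    (π : Matrix α α ℂ) (hij : i ≤ j) (hjn : j ≤ n) :
    reducedCh (reducedCh P π j hjn) π i hij = reducedCh P π i (hij.trans hjn) := by
  funext X
  simp only [reducedCh_eq_ptraceTail, padTail_padTail, ptraceTail_ptraceTail]

end ReducedChannels

section TensorSplit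

variable {α β γ : Type} {r i j m n : ℕ}

lemma splitEquiv_fst (h : r + j = n) (f : Fin n → γ) (t : Fin r) :
    (splitEquiv h γ f).1 t = f ⟨t, by omega⟩ :=
  rfl

lemma splitEquiv_snd (h : r + j = n) (f : Fin n → γ) (t : Fin j) :
    (splitEquiv h γ f).2 t = f ⟨r + t, by omega⟩ :=
  rfl

lemma splitEquiv_symm_apply (h : r + j = n) (u : Fin r → γ) (x : Fin j → γ) (s : Fin n) :
    (splitEquiv h γ).symm (u, x) s =
      if hs : (s : ℕ) < r then u ⟨s, hs⟩ else x ⟨(s : ℕ) - r, by omega⟩ := by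
  simp only [splitEquiv, Equiv.sumArrowEquivProdArrow, finSumFinEquiv,
    Equiv.symm_trans_apply, Equiv.symm_symm, Equiv.coe_fn_symm_mk, Equiv.arrowCongr_apply,
    Equiv.coe_refl, Function.comp_apply, id_eq]
  by_cases hs : (s : ℕ) < r
  · rw [dif_pos hs, show (finCongr h).symm s = Fin.castAdd j ⟨s, hs⟩ from Fin.ext rfl,
      Fin.addCases_left]
    rfl
  · rw [dif_neg hs, show (finCongr h).symm s = Fin.natAdd r ⟨(s:ℕ) - r, by omega⟩ from
      Fin.ext (by simp only [finCongr_symm, finCongr_apply, Fin.val_cast, Fin.natAdd_mk]; omega),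
      Fin.addCases_right]
    rfl

lemma tensorSplit_apply (h : r + j = n)
    (Φ : Matrix (Fin r → α) (Fin r → α) ℂ → Matrix (Fin r → β) (Fin r → β) ℂ)
    (Ψ : Matrix (Fin j → α) (Fin j → α) ℂ → Matrix (Fin j → β) (Fin j → β) ℂ)
    (M : Matrix (Fin n → α) (Fin n → α) ℂ) (u v : Fin n → β) :
    tensorSplit h Φ Ψ M u v =
      Ψ (fun x y => Φ (fun c d => M ((splitEquiv h α).symm (c, x)) ((splitEquiv h α).symm (d, y)))
          (splitEquiv h β u).1 (splitEquiv h β v).1)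
        (splitEquiv h β u).2 (splitEquiv h β v).2 :=
  rfl

lemma splitEquiv_symm_comp_castLE (h : r + j = n) (h' : r + i = m) (hij : i ≤ j) (hmn : m ≤ n)
    (u : Fin r → γ) (x : Fin j → γ) :
    (fun t => (splitEquiv h γ).symm (u, x) (Fin.castLE hmn t)) =
      (splitEquiv h' γ).symm (u, fun t => x (Fin.castLE hij t)) := by
  funext t
  simp only [splitEquiv_symm_apply, Fin.val_castLE]
  split_ifs
  · rfl
  · exact congrArg x (Fin.ext rfl)

lemma splitEquiv_updateHead (h : r + j = n) (h' : r + i = m) (b : Fin m → γ) (w : Fin n → γ) :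
    splitEquiv h γ (updateHead b w) =
      ((splitEquiv h' γ b).1, updateHead (splitEquiv h' γ b).2 (splitEquiv h γ w).2) := by
  refine Prod.ext (funext fun t => ?_) (funext fun t => ?_) <;>
    simp only [splitEquiv_fst, splitEquiv_snd, updateHead]
  all_goals split_ifs <;> first | rfl | omega

lemma padTail_splitEquiv_symm (π : Matrix α α ℂ) (h : r + j = n) (h' : r + i = m) (hij : i ≤ j)
    (hmn : m ≤ n) (X : Matrix (Fin m → α) (Fin m → α) ℂ) (c d : Fin r → α) (x y : Fin j → α) :
    padTail π hmn X ((splitEquiv h α).symm (c, x)) ((splitEquiv h α).symm (d, y)) =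
      X ((splitEquiv h' α).symm (c, fun t => x (Fin.castLE hij t)))
          ((splitEquiv h' α).symm (d, fun t => y (Fin.castLE hij t))) *
        ∏ t : Fin j, if i ≤ (t : ℕ) then π (x t) (y t) else 1 := by
  simp only [padTail, splitEquiv_symm_comp_castLE h h' hij hmn]
  congr 1
  symm
  refine Fintype.prod_of_injective (fun t : Fin j => (⟨r + t, by omega⟩ : Fin n))
    (fun t t' htt => Fin.ext (by simpa using htt)) _ _ (fun s hs => ?_) fun t => ?_
  · refine if_neg fun hms => hs ⟨⟨s - r, by omega⟩, Fin.ext ?_⟩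
    dsimp only
    omega
  · simp only [splitEquiv_symm_apply, dif_neg (show ¬ r + (t : ℕ) < r by omega),
      Nat.add_sub_cancel_left]
    exact if_congr (by omega) rfl rfl

lemma mapPow_smul [Fintype α] [DecidableEq α] (Φ : Matrix α α ℂ → Matrix β β ℂ) (r : ℕ) (z : ℂ)
    (M : Matrix (Fin r → α) (Fin r → α) ℂ) :
    mapPow Φ r (z • M) = z • mapPow Φ r M := by
  ext y y'
  simp only [mapPow, Matrix.smul_apply, smul_eq_mul, Finset.mul_sum, mul_assoc]

lemma apply_mul_const_of_smul {ι κ : Type} (Φ : Matrix ι ι ℂ → Matrix κ κ ℂ)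
    (hΦ : ∀ (z : ℂ) M, Φ (z • M) = z • Φ M) (Y : Matrix ι ι ℂ) (z : ℂ) (p q : κ) :
    Φ (fun c d => Y c d * z) p q = Φ Y p q * z := by
  have hYz : (fun c d => Y c d * z) = z • Y := by
    ext c d
    exact mul_comm _ _
  rw [hYz, hΦ, Matrix.smul_apply, smul_eq_mul, mul_comm]

theorem reducedCh_tensorSplit [Fintype α] [Fintype β] [DecidableEq β]
    (h : r + j = n) (h' : r + i = m) (hij : i ≤ j) (hmn : m ≤ n)
    (Φ : Matrix (Fin r → α) (Fin r → α) ℂ → Matrix (Fin r → β) (Fin r → β) ℂ)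
    (hΦ : ∀ (z : ℂ) M, Φ (z • M) = z • Φ M)
    (Ψ : Matrix (Fin j → α) (Fin j → α) ℂ → Matrix (Fin j → β) (Fin j → β) ℂ)
    (π : Matrix α α ℂ) :
    reducedCh (tensorSplit h Φ Ψ) π m hmn = tensorSplit h' Φ (reducedCh Ψ π i hij) := by
  funext X
  ext a b
  rw [reducedCh_eq_ptraceTail, tensorSplit_apply]
  simp only [ptraceTail]
  rw [← (splitEquiv h β).symm.sum_comp, Fintype.sum_prod_type,
    Fintype.sum_eq_single (splitEquiv h' β a).1]
  · refine Finset.sum_congr rfl fun w _ => ?_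
    refine if_congr ?_ ?_ rfl
    · rw [splitEquiv_symm_comp_castLE h h' hij hmn, Equiv.symm_apply_eq, Prod.ext_iff]
      simp
    · simp only [tensorSplit_apply, Equiv.apply_symm_apply, splitEquiv_updateHead h h',
        padTail_splitEquiv_symm π h h' hij hmn]
      congr 1
      funext x y
      exact apply_mul_const_of_smul Φ hΦ _ _ _ _
  · intro u hu
    refine Finset.sum_eq_zero fun w _ => if_neg ?_
    rw [splitEquiv_symm_comp_castLE h h' hij hmn, Equiv.symm_apply_eq]
    exact fun he => hu (congrArg Prod.fst he)

end TensorSplit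

theorem catalyst_channel_returned_general {α β : Type} [Fintype α] [DecidableEq α]
    [Fintype β] [DecidableEq β] {n : ℕ}
    (N : Matrix α α ℂ → Matrix β β ℂ)
    (P : Matrix (Fin n → α) (Fin n → α) ℂ → Matrix (Fin n → β) (Fin n → β) ℂ)
    (π : Matrix α α ℂ) :
    ∀ X : Matrix (Fin (n - 1) → α) (Fin (n - 1) → α) ℂ,
      feedTraceLast (G2 N P π) π X = Ccat N P π X := by
  intro X
  ext ⟨a, k⟩ ⟨b, l⟩
  by_cases hkl : k = l
  · subst hkl
    have hk : (k : ℕ) < n := k.isLt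
    calc feedTraceLast (G2 N P π) π X (a, k) (b, k)
        = 1 / n * reducedCh (tensorSplit (by omega : (k : ℕ) + (n - k) = n) (mapPow N k)
            (reducedCh P π (n - k) (Nat.sub_le n k))) π (n - 1) (Nat.sub_le n 1) X a b := by
          rw [reducedCh_eq_ptraceTail, ptraceTail_sub_one_apply k.pos, Finset.mul_sum]
          simp only [feedTraceLast, G2, ↓reduceIte]
          rfl
      _ = 1 / n * tensorSplit (by omega : (k : ℕ) + (n - 1 - k) = n - 1) (mapPow N k)
            (reducedCh (reducedCh P π (n - k) (Nat.sub_le n k)) π (n - 1 - k) (by omega))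
            X a b := by
          rw [reducedCh_tensorSplit _ _ _ _ _ (mapPow_smul N k)]
      _ = Ccat N P π X (a, k) (b, k) := by
          rw [reducedCh_reducedCh]
          simp [Ccat]
  · simp [feedTraceLast, G2, Ccat, hkl]

/-- The reduced channel of `G₂` obtained by feeding the maximally mixed
state `π` into the `n`-th input factor and tracing out the `n`-th output `B`-factor equals
the catalyst channel `C`: the catalyst channel is exactly returned. -/
theorem catalyst_channel_returned {α β : Type} [Fintype α] [DecidableEq α]
    [Fintype β] [DecidableEq β] {n : ℕ} (hn : 1 ≤ n)
    (N : Matrix α α ℂ → Matrix β β ℂ) (hN : IsChannel N)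
    (P : Matrix (Fin n → α) (Fin n → α) ℂ → Matrix (Fin n → β) (Fin n → β) ℂ)
    (hP : IsChannel P)
    (π : Matrix α α ℂ) (hπ : π = ((Fintype.card α : ℂ))⁻¹ • (1 : Matrix α α ℂ)) :
    ∀ X : Matrix (Fin (n - 1) → α) (Fin (n - 1) → α) ℂ,
      feedTraceLast (G2 N P π) π X = Ccat N P π X :=
  catalyst_channel_returned_general N P π

end PaperQI
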